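/- arXiv:1507.08479 — 3 statements merged into one kernel-verified Lean document; each statement's English description precedes it below -/
import Mathlib

section
/- Let 0 < q < p ≤ 1 be reals, n ≥ 1 a natural number, and 0 ≤ k ≤ n. For every x ∈ (0,1), the (p,q)-derivative of the function g(x) = P_{n,k}(p,q; x/p) satisfies D_{p,q}g(x) = P_{n,k}(p,q;x) · (p^{n−k}[k]_{p,q} − [n]_{p,q} x) / (p^n x(1−x)); that is, (P_{n,k}(p,q; x) − P_{n,k}(p,q; qx/p)) / ((p−q)x) = P_{n,k}(p,q;x)(p^{n−k}[k]_{p,q} − [n]_{p,q} x)/(p^n x(1−x)). -/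
open Finset Set

/-- The `(p,q)`-integer `[k]_{p,q} = (p^k - q^k)/(p - q)` (so `[0]_{p,q} = 0`). -/
noncomputable def pqInt (p q : ℝ) (k : ℕ) : ℝ := (p ^ k - q ^ k) / (p - q)

/-- The `(p,q)`-factorial `[k]_{p,q}! = ∏_{j=1}^k [j]_{p,q}` (`[0]_{p,q}! = 1`). -/
noncomputable def pqFact (p q : ℝ) (k : ℕ) : ℝ := ∏ j ∈ Finset.range k, pqInt p q (j + 1)

/-- The `(p,q)`-binomial coefficient. -/
noncomputable def pqBinom (p q : ℝ) (n k : ℕ) : ℝ :=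
  pqFact p q n / (pqFact p q k * pqFact p q (n - k))

/-- The `(p,q)`-Bernstein basis function
`P_{n,k}(p,q;x) = p^{k(k-1)/2} [n choose k]_{p,q} x^k ∏_{s=0}^{n-k-1} (p^s - q^s x)`. -/
noncomputable def pqBern (p q : ℝ) (n k : ℕ) (x : ℝ) : ℝ :=
  p ^ (k * (k - 1) / 2) * pqBinom p q n k * x ^ k *
    ∏ s ∈ Finset.range (n - k), (p ^ s - q ^ s * x)

/-- The node `x_{n,k} = p^{n-k} [k]_{p,q} / [n]_{p,q}`. -/
noncomputable def pqNode (p q : ℝ) (n k : ℕ) : ℝ := p ^ (n - k) * pqInt p q k / pqInt p q n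

/-- The `(p,q)`-power central moment
`B_{n,p,q}((t-a)^m_{p,q}; y) = p^{-n(n-1)/2} ∑_{k=0}^n (∏_{s=0}^{m-1}(p^s x_{n,k} - q^s a)) P_{n,k}(p,q;y)`. -/
noncomputable def pqPowMoment (p q : ℝ) (n m : ℕ) (a y : ℝ) : ℝ :=
  (p ^ (n * (n - 1) / 2))⁻¹ *
    ∑ k ∈ Finset.range (n + 1),
      (∏ s ∈ Finset.range m, (p ^ s * pqNode p q n k - q ^ s * a)) * pqBern p q n k y

/-- The `m`-th absolute central moment
`B_{n,p,q}(|t-x|^m; x) = p^{-n(n-1)/2} ∑_{k=0}^n |x_{n,k} - x|^m P_{n,k}(p,q;x)`. -/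
noncomputable def pqAbsMoment (p q : ℝ) (n m : ℕ) (x : ℝ) : ℝ :=
  (p ^ (n * (n - 1) / 2))⁻¹ *
    ∑ k ∈ Finset.range (n + 1), |pqNode p q n k - x| ^ m * pqBern p q n k x

/-- The ordinary `m`-th central moment
`B_{n,p,q}((t-x)^m; x) = p^{-n(n-1)/2} ∑_{k=0}^n (x_{n,k} - x)^m P_{n,k}(p,q;x)`. -/
noncomputable def pqMoment (p q : ℝ) (n m : ℕ) (x : ℝ) : ℝ :=
  (p ^ (n * (n - 1) / 2))⁻¹ *
    ∑ k ∈ Finset.range (n + 1), (pqNode p q n k - x) ^ m * pqBern p q n k x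

/-- The `(p,q)`-Bernstein operator `B_{n,p,q}(f;x)`. -/
noncomputable def pqBernstein (p q : ℝ) (n : ℕ) (f : ℝ → ℝ) (x : ℝ) : ℝ :=
  (p ^ (n * (n - 1) / 2))⁻¹ *
    ∑ k ∈ Finset.range (n + 1), f (pqNode p q n k) * pqBern p q n k x

/-- The `r`-th order generalization `B^{[r]}_{n,p,q}(f;x)` where `f^{(i)}` is interpreted as
`iteratedDerivWithin i f (Set.Icc 0 1)`. -/
noncomputable def pqBernsteinR (p q : ℝ) (n r : ℕ) (f : ℝ → ℝ) (x : ℝ) : ℝ :=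
  (p ^ (n * (n - 1) / 2))⁻¹ *
    ∑ k ∈ Finset.range (n + 1), pqBern p q n k x *
      ∑ i ∈ Finset.range (r + 1),
        iteratedDerivWithin i f (Set.Icc 0 1) (pqNode p q n k) / (i.factorial : ℝ) *
          (x - pqNode p q n k) ^ i

/-- The modulus of continuity on `[0,1]`:
`ω(g; δ) = sup { |g u - g v| : u, v ∈ [0,1], |u - v| ≤ δ }`. -/
noncomputable def modulusOfContinuity (g : ℝ → ℝ) (δ : ℝ) : ℝ :=
  sSup {d : ℝ | ∃ u ∈ Set.Icc (0 : ℝ) 1, ∃ v ∈ Set.Icc (0 : ℝ) 1, |u - v| ≤ δ ∧ d = |g u - g v|}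
/-- the `(p,q)`-derivative of `x ↦ P_{n,k}(p,q; x/p)` equals
`P_{n,k}(p,q;x)(p^{n-k}[k] - [n]x)/(p^n x(1-x))`. -/
theorem pq_deriv_bernstein_basis (p q : ℝ) (hq : 0 < q) (hqp : q < p) (hp : p ≤ 1)
    (n k : ℕ) (hn : 1 ≤ n) (hk : k ≤ n) (x : ℝ) (hx : x ∈ Set.Ioo (0 : ℝ) 1) :
    (pqBern p q n k x - pqBern p q n k (q * x / p)) / ((p - q) * x) =
      pqBern p q n k x * (p ^ (n - k) * pqInt p q k - pqInt p q n * x) /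
        (p ^ n * x * (1 - x)) := by
  obtain ⟨hx0, hx1⟩ := hx
  have hp0 : 0 < p := hq.trans hqp
  have hpne : p ≠ 0 := hp0.ne'
  have hpq : p - q ≠ 0 := sub_ne_zero.mpr hqp.ne'
  have hxne : x ≠ 0 := hx0.ne'
  have hx1' : (1:ℝ) - x ≠ 0 := ne_of_gt (by linarith)
  set m := n - k with hm
  have hnm : k + m = n := Nat.add_sub_cancel' hk
  have hB : p ^ m * ∏ s ∈ Finset.range m, (p ^ s - q ^ s * (q * x / p)) =
      ∏ s ∈ Finset.range m, (p ^ (s + 1) - q ^ (s + 1) * x) := by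
    have h : ∀ s ∈ Finset.range m,
        p ^ (s + 1) - q ^ (s + 1) * x = p * (p ^ s - q ^ s * (q * x / p)) := fun s _ => by
      field_simp; ring
    rw [Finset.prod_congr rfl h, Finset.prod_mul_distrib, Finset.prod_const, Finset.card_range]
  have hshift : (∏ s ∈ Finset.range m, (p ^ (s + 1) - q ^ (s + 1) * x)) * (1 - x) =
      (∏ s ∈ Finset.range m, (p ^ s - q ^ s * x)) * (p ^ m - q ^ m * x) := by
    have h1 := Finset.prod_range_succ' (fun s => p ^ s - q ^ s * x) m
    have h2 := Finset.prod_range_succ (fun s => p ^ s - q ^ s * x) m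
    simp only [pow_zero, one_mul] at h1 h2
    rw [← h1, h2]
  have hpn : p ^ n = p ^ k * p ^ m := by rw [← pow_add, hnm]
  have hqn : q ^ n = q ^ k * q ^ m := by rw [← pow_add, hnm]
  have e1 : (q * x / p) ^ k * p ^ k = q ^ k * x ^ k := by
    rw [div_pow, mul_pow, div_mul_cancel₀ _ (pow_ne_zero k hpne)]
  have key : p ^ n * (1 - x) * pqBern p q n k (q * x / p)
      = q ^ k * (p ^ m - q ^ m * x) * pqBern p q n k x := by
    unfold pqBern
    rw [hpn]
    linear_combination
      (p ^ (k * (k - 1) / 2) * pqBinom p q n k * (1 - x) * p ^ m *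
        ∏ s ∈ Finset.range m, (p ^ s - q ^ s * (q * x / p))) * e1 +
      (p ^ (k * (k - 1) / 2) * pqBinom p q n k * q ^ k * x ^ k * (1 - x)) * hB +
      (p ^ (k * (k - 1) / 2) * pqBinom p q n k * q ^ k * x ^ k) * hshift
  unfold pqInt
  rw [hpn] at key
  rw [hpn, hqn]
  rw [div_eq_div_iff (by positivity) (by positivity)]
  have hpqinv : (p - q) * (p - q)⁻¹ = 1 := mul_inv_cancel₀ hpq
  linear_combination (-x) * key -
    (pqBern p q n k x * x * (p ^ m * (p ^ k - q ^ k) - (p ^ k * p ^ m - q ^ k * q ^ m) * x)) * hpqinv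
end

section
/- Let 0 < q < p ≤ 1 be reals, n ≥ 1 and m ≥ 1 natural numbers. For every x ∈ (0,1): B_{n,p,q}((t−x)^{m+1}_{p,q}; x) = (p^{m+n} x(1−x)/[n]_{p,q}) · D_{p,q}[ y ↦ B_{n,p,q}((t − y/p)^m_{p,q}; y/p) ](x) + (p^{m+n−1}[m]_{p,q} x(1−x)/[n]_{p,q}) · B_{n,p,q}((t − qx/p)^{m−1}_{p,q}; qx/p) + ([m]_{p,q}(p^n − q^n)x/[n]_{p,q}) · B_{n,p,q}((t−x)^m_{p,q}; x). -/
open Finset Set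

/-! The identity holds summand by summand. Write `P = P_{n,k}(p,q;·)` and `ξ = x_{n,k}`. Since
`p^n (1 - x) P(qx/p) = q^k (p^{n-k} - q^{n-k} x) P(x)`, the basis functions satisfy
`[n]_{p,q} (ξ - x) P(x) = p^n (1 - x) (P(x) - P(qx/p)) / (p - q)`. Splitting
`(ξ - x)^{m+1}_{p,q} = (ξ - x)^m_{p,q} (p^m (ξ - x) + (p^m - q^m) x)`, the first part becomes a
`(p,q)`-difference quotient of `P`, and the `(p,q)`-difference rule
`(ξ - qx/p)^m_{p,q} - (ξ - x)^m_{p,q} = (p^m - q^m) (x/p) (ξ - qx/p)^{m-1}_{p,q}` moves the shifted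
argument into the power as well. -/

/-- The `(p,q)`-power `(t - a)^m_{p,q}`. -/
def pqPow (p q t a : ℝ) (m : ℕ) : ℝ := ∏ s ∈ range m, (p ^ s * t - q ^ s * a)

lemma pqPow_succ (p q t a : ℝ) (m : ℕ) :
    pqPow p q t a (m + 1) = pqPow p q t a m * (p ^ m * t - q ^ m * a) :=
  prod_range_succ _ _

lemma pqPow_succ_mul_q_sub_mul_p (p q t b : ℝ) (m : ℕ) :
    pqPow p q t (q * b) (m + 1) - pqPow p q t (p * b) (m + 1) =
      (p ^ (m + 1) - q ^ (m + 1)) * b * pqPow p q t (q * b) m := by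
  induction m with
  | zero => simp only [pqPow, prod_range_succ, prod_range_zero]; ring
  | succ m ih =>
    simp only [pqPow_succ] at ih ⊢
    linear_combination (p ^ (m + 1) * t - q ^ (m + 1) * (p * b)) * ih

lemma pow_mul_prod_q_mul_div {p : ℝ} (hp : p ≠ 0) (q x : ℝ) (j : ℕ) :
    p ^ j * ∏ s ∈ range j, (p ^ s - q ^ s * (q * x / p)) =
      ∏ s ∈ range j, (p ^ (s + 1) - q ^ (s + 1) * x) := by
  rw [show p ^ j = ∏ _s ∈ range j, p by simp, ← prod_mul_distrib]
  refine prod_congr rfl fun s _ => ?_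
  field_simp
  ring

lemma one_sub_mul_prod_succ (p q x : ℝ) (j : ℕ) :
    (1 - x) * ∏ s ∈ range j, (p ^ (s + 1) - q ^ (s + 1) * x) =
      (p ^ j - q ^ j * x) * ∏ s ∈ range j, (p ^ s - q ^ s * x) := by
  have h := prod_range_succ' (fun s => p ^ s - q ^ s * x) j
  rw [prod_range_succ] at h
  simp only [pow_zero, one_mul] at h
  linear_combination -h

lemma pow_mul_one_sub_mul_pqBern_q_mul_div {p : ℝ} (hp : p ≠ 0) (q : ℝ) {n k : ℕ} (hk : k ≤ n)
    (x : ℝ) :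
    p ^ n * (1 - x) * pqBern p q n k (q * x / p) =
      q ^ k * (p ^ (n - k) - q ^ (n - k) * x) * pqBern p q n k x := by
  obtain ⟨j, rfl⟩ := Nat.exists_eq_add_of_le hk
  simp only [pqBern, Nat.add_sub_cancel_left]
  calc _ = p ^ (k * (k - 1) / 2) * pqBinom p q (k + j) k * q ^ k * x ^ k *
        ((1 - x) * (p ^ j * ∏ s ∈ range j, (p ^ s - q ^ s * (q * x / p)))) := by
        generalize ∏ s ∈ range j, (p ^ s - q ^ s * (q * x / p)) = r
        rw [div_pow, mul_pow, pow_add]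
        field_simp
    _ = _ := by
      rw [pow_mul_prod_q_mul_div hp, one_sub_mul_prod_succ]
      ring

lemma pqInt_mul_pqNode_sub_mul_pqBern {p q : ℝ} (hp : p ≠ 0) (hpq : p ≠ q) {n k : ℕ}
    (hn : pqInt p q n ≠ 0) (hk : k ≤ n) (x : ℝ) :
    pqInt p q n * (pqNode p q n k - x) * pqBern p q n k x =
      p ^ n * (1 - x) * (pqBern p q n k x - pqBern p q n k (q * x / p)) / (p - q) := by
  have hpq' : p - q ≠ 0 := sub_ne_zero.2 hpq
  have hnode : pqInt p q n * pqNode p q n k = p ^ (n - k) * pqInt p q k := by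
    unfold pqNode
    field_simp
  have hint : ∀ i, pqInt p q i * (p - q) = p ^ i - q ^ i := fun i => div_mul_cancel₀ _ hpq'
  have hp_pow : p ^ n = p ^ (n - k) * p ^ k := by rw [← pow_add, Nat.sub_add_cancel hk]
  have hq_pow : q ^ n = q ^ (n - k) * q ^ k := by rw [← pow_add, Nat.sub_add_cancel hk]
  rw [eq_div_iff hpq', mul_sub (p ^ n * (1 - x)), pow_mul_one_sub_mul_pqBern_q_mul_div hp q hk x]
  linear_combination (p - q) * pqBern p q n k x * hnode + p ^ (n - k) * pqBern p q n k x * hint k -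
    x * pqBern p q n k x * hint n - pqBern p q n k x * hp_pow +
    x * pqBern p q n k x * hq_pow

lemma pqPowMoment_eq_sum (p q : ℝ) (n m : ℕ) (a y : ℝ) :
    pqPowMoment p q n m a y = (p ^ (n * (n - 1) / 2))⁻¹ *
      ∑ k ∈ range (n + 1), pqPow p q (pqNode p q n k) a m * pqBern p q n k y :=
  rfl

lemma pqPow_mul_pqBern_recurrence {p q : ℝ} (hp : p ≠ 0) (hpq : p ≠ q) {n k : ℕ}
    (hn : pqInt p q n ≠ 0) (hk : k ≤ n) {x : ℝ} (hx : x ≠ 0) (m : ℕ) :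
    pqPow p q (pqNode p q n k) x (m + 2) * pqBern p q n k x =
      p ^ (m + 1 + n) * x * (1 - x) / pqInt p q n *
          ((pqPow p q (pqNode p q n k) x (m + 1) * pqBern p q n k x -
              pqPow p q (pqNode p q n k) (q * x / p) (m + 1) * pqBern p q n k (q * x / p)) /
            ((p - q) * x)) +
        p ^ (m + n) * pqInt p q (m + 1) * x * (1 - x) / pqInt p q n *
          (pqPow p q (pqNode p q n k) (q * x / p) m * pqBern p q n k (q * x / p)) +
        pqInt p q (m + 1) * (p ^ n - q ^ n) * x / pqInt p q n *
          (pqPow p q (pqNode p q n k) x (m + 1) * pqBern p q n k x) := by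
  have hpq' : p - q ≠ 0 := sub_ne_zero.2 hpq
  have hbern : (pqNode p q n k - x) * pqBern p q n k x =
      p ^ n * (1 - x) * (pqBern p q n k x - pqBern p q n k (q * x / p)) /
        ((p - q) * pqInt p q n) := by
    have h := pqInt_mul_pqNode_sub_mul_pqBern hp hpq hn hk x
    rw [eq_div_iff hpq'] at h
    rw [eq_div_iff (mul_ne_zero hpq' hn)]
    linear_combination h
  have hshift : pqPow p q (pqNode p q n k) x (m + 1) =
      pqPow p q (pqNode p q n k) (q * x / p) (m + 1) -
        (p ^ (m + 1) - q ^ (m + 1)) * (x / p) * pqPow p q (pqNode p q n k) (q * x / p) m := by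
    have h := pqPow_succ_mul_q_sub_mul_p p q (pqNode p q n k) (x / p) m
    rw [mul_div_assoc', mul_div_cancel₀ x hp] at h
    linear_combination -h
  have hsplit : pqPow p q (pqNode p q n k) x (m + 2) * pqBern p q n k x =
      p ^ (m + 1) * pqPow p q (pqNode p q n k) x (m + 1) *
          ((pqNode p q n k - x) * pqBern p q n k x) +
        (p ^ (m + 1) - q ^ (m + 1)) * x * pqPow p q (pqNode p q n k) x (m + 1) * pqBern p q n k x := by
    rw [pqPow_succ]
    ring
  have hn' : p ^ n - q ^ n ≠ 0 := (div_ne_zero_iff.1 hn).1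
  rw [hsplit, hbern, hshift]
  unfold pqInt
  field_simp
  ring

lemma pqInt_pos {p q : ℝ} (hq : 0 ≤ q) (hqp : q < p) {n : ℕ} (hn : n ≠ 0) : 0 < pqInt p q n :=
  div_pos (sub_pos.2 (pow_lt_pow_left₀ hqp hq hn)) (sub_pos.2 hqp)

theorem pq_powMoment_recurrence_general (p q : ℝ) (hq : 0 < q) (hqp : q < p)
    (n m : ℕ) (hn : 1 ≤ n) (hm : 1 ≤ m) (x : ℝ) (hx : x ∈ Set.Ioo (0 : ℝ) 1) :
    pqPowMoment p q n (m + 1) x x =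
      p ^ (m + n) * x * (1 - x) / pqInt p q n *
          ((pqPowMoment p q n m (p * x / p) (p * x / p) -
              pqPowMoment p q n m (q * x / p) (q * x / p)) / ((p - q) * x)) +
        p ^ (m + n - 1) * pqInt p q m * x * (1 - x) / pqInt p q n *
          pqPowMoment p q n (m - 1) (q * x / p) (q * x / p) +
        pqInt p q m * (p ^ n - q ^ n) * x / pqInt p q n * pqPowMoment p q n m x x := by
  have hp : p ≠ 0 := (hq.trans hqp).ne'
  have hpqn : pqInt p q n ≠ 0 := (pqInt_pos hq.le hqp (by omega)).ne'
  obtain ⟨m, rfl⟩ := Nat.exists_eq_add_of_le' hm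
  rw [mul_div_cancel_left₀ x hp, show m + 1 + n - 1 = m + n by omega, Nat.add_sub_cancel]
  simp only [pqPowMoment_eq_sum]
  rw [sum_congr rfl fun k hk => pqPow_mul_pqBern_recurrence hp hqp.ne' hpqn
    (Nat.lt_succ_iff.1 (mem_range.1 hk)) hx.1.ne' m]
  simp only [sum_add_distrib, ← mul_sum, ← sum_div, sum_sub_distrib]
  ring

/-- the recurrence for the `(p,q)`-power central moments, where the middle
factor of the first summand is the `(p,q)`-derivative at `x` of
`y ↦ B_{n,p,q}((t - y/p)^m_{p,q}; y/p)`. -/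
theorem pq_powMoment_recurrence (p q : ℝ) (hq : 0 < q) (hqp : q < p) (hp : p ≤ 1)
    (n m : ℕ) (hn : 1 ≤ n) (hm : 1 ≤ m) (x : ℝ) (hx : x ∈ Set.Ioo (0 : ℝ) 1) :
    pqPowMoment p q n (m + 1) x x =
      p ^ (m + n) * x * (1 - x) / pqInt p q n *
          ((pqPowMoment p q n m (p * x / p) (p * x / p) -
              pqPowMoment p q n m (q * x / p) (q * x / p)) / ((p - q) * x)) +
        p ^ (m + n - 1) * pqInt p q m * x * (1 - x) / pqInt p q n *
          pqPowMoment p q n (m - 1) (q * x / p) (q * x / p) +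
        pqInt p q m * (p ^ n - q ^ n) * x / pqInt p q n * pqPowMoment p q n m x x :=
  pq_powMoment_recurrence_general p q hq hqp n m hn hm x hx
end

section
/- For each fixed natural number m ≥ 1 there exists a constant C_m > 0 such that for every natural number n ≥ 1, all reals p, q with 0 < q < p ≤ 1, and every x ∈ [0,1]: |B_{n,p,q}((t−x)^m_{p,q}; x)| ≤ C_m · x(1−x)/[n]_{p,q}^{⌊(m+1)/2⌋}. -/
open Finset Set

/-!
Substituting `q ↦ q / p` turns the `(p,q)`-moment into `p^{m(m-1)/2}` times the `q`-moment
`S_m(x) = ∑_k ∏_{s<m} (x_k - q^s x) b_k(x)` of the `q`-Bernstein basis `b_k`, and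
`[n]_{p,q} ≤ [n]_{q/p}`, so it suffices to treat `p = 1`. There the identity
`(1 - x)(b_k(x) - b_k(qx)) = (1 - q)([k] - [n] x) b_k(x)` gives
`(1 - q) [n] S_{m+1}(x) = (1 - x)(T_m(x) - S_m(qx))`, where `T_m` is the moment centred at `qx`,
and `T_{m+1} = S_{m+1} + (1 - q^{m+1}) x T_m`. As `1 - q ≤ 1 / [n]`, an induction on `m` that
tracks coefficient bounds of these polynomials (a `q`-difference costs only a factor of the
degree) shows `T_m = O([n]^{-⌊(m+1)/2⌋})` and `S_{m+1} = x (1 - x) V_m / [n]` with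
`V_m = O([n]^{-⌊m/2⌋})`.
-/

section QInt
variable {q : ℝ}

lemma pqInt_one_eq_geom_sum (hq : q ≠ 1) (k : ℕ) : pqInt 1 q k = ∑ i ∈ range k, q ^ i := by
  rw [pqInt, geom_sum_eq hq, one_pow, ← neg_sub q, ← neg_sub (q ^ k), neg_div_neg_eq]

lemma one_sub_mul_pqInt_one (hq : q ≠ 1) (k : ℕ) : (1 - q) * pqInt 1 q k = 1 - q ^ k := by
  rw [pqInt_one_eq_geom_sum hq, mul_neg_geom_sum]

lemma pqInt_one_add (hq : q ≠ 1) (a b : ℕ) :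
    pqInt 1 q (a + b) = pqInt 1 q a + q ^ a * pqInt 1 q b := by
  simp only [pqInt_one_eq_geom_sum hq, sum_range_add, pow_add, mul_sum]

lemma pqInt_one_nonneg (hq0 : 0 ≤ q) (hq1 : q < 1) (k : ℕ) : 0 ≤ pqInt 1 q k := by
  rw [pqInt_one_eq_geom_sum hq1.ne]
  positivity

lemma pqInt_one_pos (hq0 : 0 ≤ q) (hq1 : q < 1) {k : ℕ} (hk : k ≠ 0) : 0 < pqInt 1 q k := by
  rw [pqInt_one_eq_geom_sum hq1.ne]
  exact geom_sum_pos hq0 hk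

lemma one_le_pqInt_one (hq0 : 0 ≤ q) (hq1 : q < 1) {k : ℕ} (hk : k ≠ 0) :
    1 ≤ pqInt 1 q k := by
  rw [pqInt_one_eq_geom_sum hq1.ne, ← pow_zero q]
  exact single_le_sum (fun i _ => pow_nonneg hq0 i) (mem_range.2 (Nat.pos_of_ne_zero hk))

lemma pqInt_one_le (hq0 : 0 ≤ q) (hq1 : q < 1) (k : ℕ) : pqInt 1 q k ≤ k := by
  rw [pqInt_one_eq_geom_sum hq1.ne]
  simpa using sum_le_card_nsmul (range k) (q ^ ·) 1 fun i _ => pow_le_one₀ hq0 hq1.le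

lemma inv_pqInt_one_le_one (hq0 : 0 ≤ q) (hq1 : q < 1) {n : ℕ} (hn : n ≠ 0) :
    (pqInt 1 q n)⁻¹ ≤ 1 :=
  inv_le_one_of_one_le₀ (one_le_pqInt_one hq0 hq1 hn)

lemma one_sub_le_inv_pqInt_one (hq0 : 0 ≤ q) (hq1 : q < 1) {n : ℕ} (hn : n ≠ 0) :
    1 - q ≤ (pqInt 1 q n)⁻¹ := by
  rw [← one_div, le_div_iff₀ (pqInt_one_pos hq0 hq1 hn), one_sub_mul_pqInt_one hq1.ne]
  linarith [pow_nonneg hq0 n]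

lemma pqFact_succ (p q : ℝ) (k : ℕ) : pqFact p q (k + 1) = pqFact p q k * pqInt p q (k + 1) :=
  prod_range_succ _ _

lemma pqFact_zero (p q : ℝ) : pqFact p q 0 = 1 :=
  prod_range_zero _

lemma pqFact_one_pos (hq0 : 0 ≤ q) (hq1 : q < 1) (k : ℕ) : 0 < pqFact 1 q k :=
  prod_pos fun j _ => pqInt_one_pos hq0 hq1 j.succ_ne_zero

lemma pqBinom_one_zero_right (hq0 : 0 ≤ q) (hq1 : q < 1) (n : ℕ) : pqBinom 1 q n 0 = 1 := by
  rw [pqBinom, Nat.sub_zero, pqFact_zero, one_mul,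
    div_self (pqFact_one_pos hq0 hq1 n).ne']

lemma pqBinom_one_self (hq0 : 0 ≤ q) (hq1 : q < 1) (n : ℕ) : pqBinom 1 q n n = 1 := by
  rw [pqBinom, Nat.sub_self, pqFact_zero, mul_one,
    div_self (pqFact_one_pos hq0 hq1 n).ne']

lemma pqBinom_one_succ_succ (hq0 : 0 ≤ q) (hq1 : q < 1) {n k : ℕ} (hk : k < n) :
    pqBinom 1 q (n + 1) (k + 1) = pqBinom 1 q n (k + 1) + q ^ (n - k) * pqBinom 1 q n k := by
  obtain ⟨b, rfl⟩ : ∃ b, n = k + 1 + b := ⟨n - (k + 1), by omega⟩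
  have hsplit : pqInt 1 q (k + 1 + b + 1)
      = pqInt 1 q (b + 1) + q ^ (b + 1) * pqInt 1 q (k + 1) := by
    rw [show k + 1 + b + 1 = b + 1 + (k + 1) by ring, pqInt_one_add hq1.ne]
  simp only [pqBinom, show k + 1 + b + 1 - (k + 1) = b + 1 by omega,
    show k + 1 + b - (k + 1) = b by omega, show k + 1 + b - k = b + 1 by omega,
    pqFact_succ 1 q (k + 1 + b), pqFact_succ 1 q k, pqFact_succ 1 q b, hsplit]
  have := (pqFact_one_pos hq0 hq1 k).ne'
  have := (pqFact_one_pos hq0 hq1 b).ne'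
  have := (pqInt_one_pos hq0 hq1 k.succ_ne_zero).ne'
  have := (pqInt_one_pos hq0 hq1 b.succ_ne_zero).ne'
  field_simp

end QInt

section QBernstein
variable {q : ℝ}

lemma pqBern_one (n k : ℕ) (x : ℝ) :
    pqBern 1 q n k x = pqBinom 1 q n k * x ^ k * ∏ s ∈ range (n - k), (1 - q ^ s * x) := by
  simp [pqBern]

lemma sum_pqBern_one (hq0 : 0 ≤ q) (hq1 : q < 1) (n : ℕ) (x : ℝ) :
    ∑ k ∈ range (n + 1), pqBern 1 q n k x = 1 := by
  induction n with
  | zero => simp [pqBern_one, pqBinom_one_self hq0 hq1]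
  | succ n ih =>
    have hfirst : pqBern 1 q (n + 1) 0 x = (1 - q ^ n * x) * pqBern 1 q n 0 x := by
      simp only [pqBern_one, pqBinom_one_zero_right hq0 hq1, Nat.sub_zero, prod_range_succ]
      ring
    have hlast : pqBern 1 q (n + 1) (n + 1) x = x * pqBern 1 q n n x := by
      simp only [pqBern_one, pqBinom_one_self hq0 hq1, Nat.sub_self, prod_range_zero]
      ring
    have hmid : ∀ k ∈ range n, pqBern 1 q (n + 1) (k + 1) x
        = (1 - q ^ (n - (k + 1)) * x) * pqBern 1 q n (k + 1) x
          + q ^ (n - k) * x * pqBern 1 q n k x := by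
      intro k hk
      have hk : k < n := mem_range.1 hk
      simp only [pqBern_one, pqBinom_one_succ_succ hq0 hq1 hk, Nat.add_sub_add_right,
        show n - k = n - (k + 1) + 1 by omega, prod_range_succ]
      ring
    calc ∑ k ∈ range (n + 1 + 1), pqBern 1 q (n + 1) k x
        = ∑ k ∈ range (n + 1), (1 - q ^ (n - k) * x) * pqBern 1 q n k x
          + ∑ k ∈ range (n + 1), q ^ (n - k) * x * pqBern 1 q n k x := by
          rw [sum_range_succ, sum_range_succ', sum_congr rfl hmid, sum_add_distrib, hfirst, hlast,
            sum_range_succ' _ n, sum_range_succ _ n, Nat.sub_zero, Nat.sub_self, pow_zero]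
          ring
      _ = ∑ k ∈ range (n + 1), pqBern 1 q n k x := by
          rw [← sum_add_distrib]
          exact sum_congr rfl fun k _ => by ring
      _ = 1 := ih

lemma one_sub_mul_pqBern_one_mul_left (n k : ℕ) (x : ℝ) :
    (1 - x) * pqBern 1 q n k (q * x) = q ^ k * (1 - q ^ (n - k) * x) * pqBern 1 q n k x := by
  have hprod : (1 - x) * ∏ s ∈ range (n - k), (1 - q ^ s * (q * x))
      = (∏ s ∈ range (n - k), (1 - q ^ s * x)) * (1 - q ^ (n - k) * x) := by
    rw [← prod_range_succ, prod_range_succ', pow_zero, one_mul, mul_comm]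
    exact congrArg (· * _) (prod_congr rfl fun s _ => by ring)
  simp only [pqBern_one]
  linear_combination (pqBinom 1 q n k * q ^ k * x ^ k) * hprod

lemma pqPowMoment_one (n m : ℕ) (a y : ℝ) :
    pqPowMoment 1 q n m a y
      = ∑ k ∈ range (n + 1),
          (∏ s ∈ range m, (pqNode 1 q n k - q ^ s * a)) * pqBern 1 q n k y := by
  simp [pqPowMoment]

lemma pqPowMoment_one_zero (hq0 : 0 ≤ q) (hq1 : q < 1) (n : ℕ) (a y : ℝ) :
    pqPowMoment 1 q n 0 a y = 1 := by
  simp [pqPowMoment_one, sum_pqBern_one hq0 hq1]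

lemma pqPowMoment_one_succ_mul_left (n m : ℕ) (a y : ℝ) :
    pqPowMoment 1 q n (m + 1) (q * a) y
      = pqPowMoment 1 q n (m + 1) a y + (1 - q ^ (m + 1)) * a * pqPowMoment 1 q n m (q * a) y := by
  simp only [pqPowMoment_one, mul_sum, ← sum_add_distrib]
  refine sum_congr rfl fun k _ => ?_
  rw [prod_range_succ, prod_range_succ' _ m]
  have hshift : ∏ s ∈ range m, (pqNode 1 q n k - q ^ (s + 1) * a)
      = ∏ s ∈ range m, (pqNode 1 q n k - q ^ s * (q * a)) :=
    prod_congr rfl fun s _ => by ring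
  rw [hshift]
  ring

lemma one_sub_mul_pqInt_one_mul_pqPowMoment_one_succ (hq0 : 0 ≤ q) (hq1 : q < 1) {n : ℕ}
    (hn : n ≠ 0) (m : ℕ) (x : ℝ) :
    (1 - q) * pqInt 1 q n * pqPowMoment 1 q n (m + 1) x x
      = (1 - x) * (pqPowMoment 1 q n m (q * x) x - pqPowMoment 1 q n m (q * x) (q * x)) := by
  simp only [pqPowMoment_one, mul_sum, ← sum_sub_distrib]
  refine sum_congr rfl fun k hk => ?_
  have hkn : k ≤ n := Nat.lt_succ_iff.1 (mem_range.1 hk)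
  set P := ∏ s ∈ range m, (pqNode 1 q n k - q ^ s * (q * x))
  have hprod : ∏ s ∈ range (m + 1), (pqNode 1 q n k - q ^ s * x)
      = P * (pqNode 1 q n k - x) := by
    rw [prod_range_succ', pow_zero, one_mul]
    exact congrArg (· * _) (prod_congr rfl fun s _ => by ring)
  have hnode : pqInt 1 q n * pqNode 1 q n k = pqInt 1 q k := by
    rw [pqNode, one_pow, one_mul, mul_div_cancel₀ _ (pqInt_one_pos hq0 hq1 hn).ne']
  have hpow : q ^ k * q ^ (n - k) = q ^ n := by rw [← pow_add, Nat.add_sub_cancel' hkn]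
  rw [hprod]
  linear_combination P * one_sub_mul_pqBern_one_mul_left n k x
    + ((1 - q) * P * pqBern 1 q n k x) * hnode
    + (P * pqBern 1 q n k x) * one_sub_mul_pqInt_one hq1.ne k
    - (x * P * pqBern 1 q n k x) * one_sub_mul_pqInt_one hq1.ne n
    - (x * P * pqBern 1 q n k x) * hpow

end QBernstein

def IsBoundedPoly (D : ℕ) (B : ℝ) (f : ℝ → ℝ) : Prop :=
  ∃ c : ℕ → ℝ, (∀ i, |c i| ≤ B) ∧ ∀ x, f x = ∑ i ∈ range D, c i * x ^ i

namespace IsBoundedPoly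
variable {D : ℕ} {B B' : ℝ} {f g : ℝ → ℝ}

lemma nonneg (h : IsBoundedPoly D B f) : 0 ≤ B := by
  obtain ⟨c, hc, -⟩ := h
  exact (abs_nonneg _).trans (hc 0)

lemma mono (h : IsBoundedPoly D B f) (hB : B ≤ B') : IsBoundedPoly D B' f := by
  obtain ⟨c, hc, hf⟩ := h
  exact ⟨c, fun i => (hc i).trans hB, hf⟩

lemma congr (h : IsBoundedPoly D B f) (hfg : ∀ x, f x = g x) : IsBoundedPoly D B g := by
  obtain ⟨c, hc, hf⟩ := h
  exact ⟨c, hc, fun x => (hfg x).symm.trans (hf x)⟩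

lemma const (r : ℝ) (hD : D ≠ 0) : IsBoundedPoly D |r| fun _ => r := by
  refine ⟨fun i => if i = 0 then r else 0, fun i => ?_, fun x => ?_⟩
  · dsimp only
    split_ifs <;> simp
  · simp [ite_mul, Nat.pos_of_ne_zero hD]

lemma add (hf : IsBoundedPoly D B f) (hg : IsBoundedPoly D B' g) :
    IsBoundedPoly D (B + B') fun x => f x + g x := by
  obtain ⟨c, hc, hf⟩ := hf
  obtain ⟨d, hd, hg⟩ := hg
  refine ⟨c + d, fun i => (abs_add_le _ _).trans (add_le_add (hc i) (hd i)), fun x => ?_⟩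
  simp only [hf, hg, Pi.add_apply, add_mul, sum_add_distrib]

lemma const_mul (r : ℝ) (h : IsBoundedPoly D B f) :
    IsBoundedPoly D (|r| * B) fun x => r * f x := by
  obtain ⟨c, hc, hf⟩ := h
  refine ⟨fun i => r * c i, fun i => ?_, fun x => ?_⟩
  · rw [abs_mul]
    exact mul_le_mul_of_nonneg_left (hc i) (abs_nonneg r)
  · simp only [hf, mul_sum, mul_assoc]

lemma X_mul (h : IsBoundedPoly D B f) : IsBoundedPoly (D + 1) B fun x => x * f x := by
  have hB := h.nonneg
  obtain ⟨c, hc, hf⟩ := h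
  refine ⟨fun i => if i = 0 then 0 else c (i - 1), fun i => ?_, fun x => ?_⟩
  · dsimp only
    split_ifs
    · simpa using hB
    · exact hc _
  · simp only [hf, mul_sum, sum_range_succ' _ D, Nat.succ_ne_zero, if_false, Nat.add_sub_cancel,
      if_true, zero_mul, add_zero, pow_succ]
    exact sum_congr rfl fun i _ => by ring

lemma succ (h : IsBoundedPoly D B f) : IsBoundedPoly (D + 1) B f := by
  have hB := h.nonneg
  obtain ⟨c, hc, hf⟩ := h
  refine ⟨fun i => if i < D then c i else 0, fun i => ?_, fun x => ?_⟩
  · dsimp only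
    split_ifs
    · exact hc i
    · simpa using hB
  · simp only [sum_range_succ, lt_irrefl, if_false, zero_mul, add_zero, hf]
    exact sum_congr rfl fun i hi => by rw [if_pos (mem_range.1 hi)]

lemma one_sub_mul (h : IsBoundedPoly D B f) :
    IsBoundedPoly (D + 1) (2 * B) fun x => (1 - x) * f x := by
  have := h.succ.add (h.X_mul.const_mul (-1))
  rw [abs_neg, abs_one, one_mul, ← two_mul] at this
  exact this.congr fun x => by ring

lemma abs_le (h : IsBoundedPoly D B f) {x : ℝ} (hx : x ∈ Set.Icc 0 1) : |f x| ≤ D * B := by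
  obtain ⟨c, hc, hf⟩ := h
  rw [hf]
  calc |∑ i ∈ range D, c i * x ^ i|
      ≤ ∑ i ∈ range D, |c i * x ^ i| := abs_sum_le_sum_abs _ _
    _ ≤ ∑ _i ∈ range D, B := sum_le_sum fun i _ => by
        rw [abs_mul, abs_pow, abs_of_nonneg hx.1]
        exact (mul_le_of_le_one_right (abs_nonneg _) (pow_le_one₀ hx.1 hx.2)).trans (hc i)
    _ = D * B := by simp

lemma exists_sub_comp_mul_eq {q : ℝ} (hq0 : 0 ≤ q) (hq1 : q < 1)
    (h : IsBoundedPoly (D + 1) B f) :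
    ∃ g, (∀ x, f x - f (q * x) = (1 - q) * x * g x) ∧ IsBoundedPoly D (D * B) g := by
  have hB := h.nonneg
  obtain ⟨c, hc, hf⟩ := h
  refine ⟨fun x =>
      ∑ i ∈ range D, (if i < D then c (i + 1) * pqInt 1 q (i + 1) else 0) * x ^ i,
    fun x => ?_, ⟨_, fun i => ?_, fun x => rfl⟩⟩
  · rw [hf, hf, ← sum_sub_distrib, mul_sum, sum_range_succ']
    simp only [pow_zero, mul_one, sub_self, add_zero]
    refine sum_congr rfl fun i hi => ?_
    rw [if_pos (mem_range.1 hi), mul_pow]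
    linear_combination (-c (i + 1) * x ^ (i + 1)) * one_sub_mul_pqInt_one hq1.ne (i + 1)
  · split_ifs with hi
    · rw [abs_mul, abs_of_nonneg (pqInt_one_nonneg hq0 hq1 _), mul_comm]
      refine mul_le_mul ((pqInt_one_le hq0 hq1 _).trans ?_) (hc _) (abs_nonneg _) D.cast_nonneg
      exact_mod_cast hi
    · simpa using mul_nonneg (Nat.cast_nonneg D) hB

end IsBoundedPoly

section Moments
variable {q : ℝ} {n : ℕ}

lemma pqPowMoment_one_succ_eq (hq0 : 0 ≤ q) (hq1 : q < 1) (hn : n ≠ 0) {m : ℕ} {V : ℝ → ℝ}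
    (hV : ∀ x, pqPowMoment 1 q n m (q * x) x - pqPowMoment 1 q n m (q * x) (q * x)
      = (1 - q) * x * V x) (x : ℝ) :
    pqPowMoment 1 q n (m + 1) x x = (pqInt 1 q n)⁻¹ * (x * ((1 - x) * V x)) := by
  have h := one_sub_mul_pqInt_one_mul_pqPowMoment_one_succ hq0 hq1 hn m x
  rw [hV] at h
  have h1q : (1 - q) ≠ 0 := by linarith
  have hnz := (pqInt_one_pos hq0 hq1 hn).ne'
  rw [eq_inv_mul_iff_mul_eq₀ hnz]
  refine mul_left_cancel₀ h1q ?_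
  linear_combination h

/-- The bounds carried through the induction on `m`: for the moment `T_m` centred at `q x`, and for
the quotient `V` of `T_m(x) - S_m(q x)` by `(1 - q) x`, which gives
`S_{m+1}(x) = x (1 - x) V(x) / [n]_q` (`pqPowMoment_one_succ_eq`). -/
def ShiftedMomentBound (q : ℝ) (n m : ℕ) (K : ℝ) : Prop :=
  IsBoundedPoly (m + 2) (K * (pqInt 1 q n)⁻¹ ^ ((m + 1) / 2))
      (fun x => pqPowMoment 1 q n m (q * x) x) ∧
    ∃ V, (∀ x, pqPowMoment 1 q n m (q * x) x - pqPowMoment 1 q n m (q * x) (q * x)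
      = (1 - q) * x * V x) ∧ IsBoundedPoly (m + 1) (K * (pqInt 1 q n)⁻¹ ^ (m / 2)) V

lemma shiftedMomentBound_zero (hq0 : 0 ≤ q) (hq1 : q < 1) : ShiftedMomentBound q n 0 1 := by
  simp only [ShiftedMomentBound, pqPowMoment_one_zero hq0 hq1, Nat.zero_div, pow_zero, mul_one]
  refine ⟨by simpa using IsBoundedPoly.const (D := 2) 1 two_ne_zero, fun _ => 0, fun x => by ring,
    (IsBoundedPoly.const (D := 1) 0 one_ne_zero).mono (by simp)⟩

lemma ShiftedMomentBound.succ (hq0 : 0 ≤ q) (hq1 : q < 1) (hn : n ≠ 0) {m : ℕ} {K : ℝ}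
    (h : ShiftedMomentBound q n m K) : ShiftedMomentBound q n (m + 1) ((3 * m + 5) * K) := by
  obtain ⟨hT, V, hV, hVb⟩ := h
  set u := (pqInt 1 q n)⁻¹
  have hu0 : 0 < u := inv_pos.2 (pqInt_one_pos hq0 hq1 hn)
  have hu1 : u ≤ 1 := inv_pqInt_one_le_one hq0 hq1 hn
  have hK : 0 ≤ K := nonneg_of_mul_nonneg_left hVb.nonneg (by positivity)
  have hS : IsBoundedPoly (m + 3) (2 * K * u ^ ((m + 2) / 2))
      (fun x => pqPowMoment 1 q n (m + 1) x x) := by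
    refine (hVb.one_sub_mul.X_mul.const_mul u).congr (fun x => ?_) |>.mono (le_of_eq ?_)
    · rw [pqPowMoment_one_succ_eq hq0 hq1 hn hV]
    · rw [abs_of_pos hu0, show (m + 2) / 2 = m / 2 + 1 by omega, pow_succ]
      ring
  have hc : |(1 - q) * pqInt 1 q (m + 1)| ≤ (m + 1) * u := by
    rw [abs_of_nonneg (mul_nonneg (by linarith) (pqInt_one_nonneg hq0 hq1 _)), mul_comm]
    exact mul_le_mul (by exact_mod_cast pqInt_one_le hq0 hq1 (m + 1))
      (one_sub_le_inv_pqInt_one hq0 hq1 hn) (by linarith) (by positivity)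
  obtain ⟨E, hE, hEb⟩ := hS.exists_sub_comp_mul_eq hq0 hq1
  constructor
  · refine (hS.add (hT.X_mul.const_mul ((1 - q) * pqInt 1 q (m + 1)))).congr (fun x => ?_)
      |>.mono ?_
    · rw [pqPowMoment_one_succ_mul_left, ← one_sub_mul_pqInt_one hq1.ne]
      ring
    · have hpow : u * u ^ ((m + 1) / 2) ≤ u ^ ((m + 2) / 2) := by
        rw [← pow_succ']
        exact pow_le_pow_of_le_one hu0.le hu1 (by omega)
      have hKu : 0 ≤ K * u ^ ((m + 2) / 2) := by positivity
      calc _ ≤ 2 * K * u ^ ((m + 2) / 2) + (m + 1) * u * (K * u ^ ((m + 1) / 2)) := by gcongr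
        _ = 2 * K * u ^ ((m + 2) / 2) + (m + 1) * K * (u * u ^ ((m + 1) / 2)) := by ring
        _ ≤ 2 * K * u ^ ((m + 2) / 2) + (m + 1) * K * u ^ ((m + 2) / 2) := by gcongr
        _ ≤ (3 * m + 5) * K * u ^ ((m + 2) / 2) := by nlinarith [m.cast_nonneg (α := ℝ)]
  · refine ⟨fun x => E x + pqInt 1 q (m + 1) * pqPowMoment 1 q n m (q * x) x, fun x => ?_,
      (hEb.add (hT.const_mul _)).mono ?_⟩
    · rw [pqPowMoment_one_succ_mul_left, ← one_sub_mul_pqInt_one hq1.ne]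
      linear_combination hE x
    · have hpow : u ^ ((m + 2) / 2) ≤ u ^ ((m + 1) / 2) :=
        pow_le_pow_of_le_one hu0.le hu1 (by omega)
      have hint : |pqInt 1 q (m + 1)| ≤ m + 1 := by
        rw [abs_of_nonneg (pqInt_one_nonneg hq0 hq1 _)]
        exact_mod_cast pqInt_one_le hq0 hq1 (m + 1)
      calc _ ≤ (m + 2) * (2 * K * u ^ ((m + 1) / 2)) + (m + 1) * (K * u ^ ((m + 1) / 2)) := by
            push_cast
            gcongr
        _ = _ := by ring

lemma shiftedMomentBound (hq0 : 0 ≤ q) (hq1 : q < 1) (hn : n ≠ 0) (m : ℕ) :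
    ShiftedMomentBound q n m (∏ j ∈ range m, (3 * j + 5 : ℝ)) := by
  induction m with
  | zero => exact shiftedMomentBound_zero hq0 hq1
  | succ m ih =>
    rw [prod_range_succ, mul_comm]
    exact ih.succ hq0 hq1 hn

lemma abs_pqPowMoment_one_succ_le (hq0 : 0 ≤ q) (hq1 : q < 1) (hn : n ≠ 0) (m : ℕ) {x : ℝ}
    (hx : x ∈ Set.Icc 0 1) :
    |pqPowMoment 1 q n (m + 1) x x|
      ≤ (m + 1) * (∏ j ∈ range m, (3 * j + 5 : ℝ))
        * (x * (1 - x) * (pqInt 1 q n)⁻¹ ^ ((m + 2) / 2)) := by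
  obtain ⟨-, V, hV, hVb⟩ := shiftedMomentBound hq0 hq1 hn m
  set K := ∏ j ∈ range m, (3 * j + 5 : ℝ)
  have hu0 : 0 ≤ (pqInt 1 q n)⁻¹ := inv_nonneg.2 (pqInt_one_nonneg hq0 hq1 n)
  have hx1 : 0 ≤ 1 - x := by linarith [hx.2]
  rw [pqPowMoment_one_succ_eq hq0 hq1 hn hV, abs_mul, abs_mul, abs_mul, abs_of_nonneg hu0,
    abs_of_nonneg hx.1, abs_of_nonneg hx1, show (m + 2) / 2 = m / 2 + 1 by omega, pow_succ]
  have := hVb.abs_le hx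
  have hxu : 0 ≤ x * (1 - x) * (pqInt 1 q n)⁻¹ := mul_nonneg (mul_nonneg hx.1 hx1) hu0
  push_cast at this
  calc _ = x * (1 - x) * (pqInt 1 q n)⁻¹ * |V x| := by ring
    _ ≤ x * (1 - x) * (pqInt 1 q n)⁻¹ * ((m + 1) * (K * (pqInt 1 q n)⁻¹ ^ (m / 2))) := by
        gcongr
    _ = _ := by ring

end Moments

section Scaling
variable {p q : ℝ}

lemma pqInt_eq_pow_mul (hp : p ≠ 0) (hqp : q ≠ p) (k : ℕ) :
    pqInt p q k = p ^ (k - 1) * pqInt 1 (q / p) k := by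
  cases k with
  | zero => simp [pqInt]
  | succ k =>
    have h1 : p - q ≠ 0 := sub_ne_zero.2 hqp.symm
    have h2 : 1 - q / p ≠ 0 := by rwa [one_sub_div hp, div_ne_zero_iff, and_iff_left hp]
    simp only [pqInt, Nat.add_sub_cancel, one_pow, div_pow]
    field_simp
    ring

lemma prod_range_pow_eq (p : ℝ) (j : ℕ) : ∏ s ∈ range j, p ^ s = p ^ (j * (j - 1) / 2) := by
  rw [prod_pow_eq_pow_sum, sum_range_id]

lemma pqFact_eq_pow_mul (hp : p ≠ 0) (hqp : q ≠ p) (k : ℕ) :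
    pqFact p q k = p ^ (k * (k - 1) / 2) * pqFact 1 (q / p) k := by
  simp only [pqFact, pqInt_eq_pow_mul hp hqp, Nat.add_sub_cancel, prod_mul_distrib,
    prod_range_pow_eq]

lemma pqBern_eq_pow_mul (hp : p ≠ 0) (hqp : q ≠ p) (n k : ℕ) (x : ℝ) :
    pqBern p q n k x = p ^ (n * (n - 1) / 2) * pqBern 1 (q / p) n k x := by
  have hprod : ∏ s ∈ range (n - k), (p ^ s - q ^ s * x)
      = p ^ ((n - k) * (n - k - 1) / 2) * ∏ s ∈ range (n - k), (1 - (q / p) ^ s * x) := by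
    rw [← prod_range_pow_eq, ← prod_mul_distrib]
    exact prod_congr rfl fun s _ => by rw [div_pow]; field_simp
  rw [pqBern, pqBern_one, pqBinom, pqBinom, pqFact_eq_pow_mul hp hqp n,
    pqFact_eq_pow_mul hp hqp k, pqFact_eq_pow_mul hp hqp (n - k), mul_mul_mul_comm,
    mul_div_mul_comm, hprod]
  generalize ∏ s ∈ range (n - k), (1 - (q / p) ^ s * x) = P
  field_simp

lemma pqNode_eq (hp : p ≠ 0) (hqp : q ≠ p) {n k : ℕ} (hk : k ≤ n) :
    pqNode p q n k = pqNode 1 (q / p) n k := by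
  rcases Nat.eq_zero_or_pos k with rfl | hk0
  · simp [pqNode, pqInt]
  · rw [pqNode, pqNode, pqInt_eq_pow_mul hp hqp k, pqInt_eq_pow_mul hp hqp n, one_pow, one_mul,
      ← mul_assoc, ← pow_add, show n - k + (k - 1) = n - 1 by omega,
      mul_div_mul_left _ _ (pow_ne_zero _ hp)]

lemma pqPowMoment_eq_pow_mul (hp : p ≠ 0) (hqp : q ≠ p) (n m : ℕ) (a y : ℝ) :
    pqPowMoment p q n m a y = p ^ (m * (m - 1) / 2) * pqPowMoment 1 (q / p) n m a y := by
  rw [pqPowMoment, pqPowMoment_one, mul_sum, mul_sum]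
  refine sum_congr rfl fun k hk => ?_
  have hprod : ∏ s ∈ range m, (p ^ s * pqNode p q n k - q ^ s * a)
      = p ^ (m * (m - 1) / 2) * ∏ s ∈ range m, (pqNode 1 (q / p) n k - (q / p) ^ s * a) := by
    rw [← prod_range_pow_eq, ← prod_mul_distrib,
      pqNode_eq hp hqp (Nat.lt_succ_iff.1 (mem_range.1 hk))]
    exact prod_congr rfl fun s _ => by rw [div_pow]; field_simp
  rw [hprod, pqBern_eq_pow_mul hp hqp]
  generalize ∏ s ∈ range m, (pqNode 1 (q / p) n k - (q / p) ^ s * a) = P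
  field_simp

lemma pqInt_le_pqInt_one_div (hp0 : 0 < p) (hp1 : p ≤ 1) (hq0 : 0 ≤ q) (hqp : q < p) (n : ℕ) :
    pqInt p q n ≤ pqInt 1 (q / p) n := by
  rw [pqInt_eq_pow_mul hp0.ne' hqp.ne]
  exact mul_le_of_le_one_left (pqInt_one_nonneg (by positivity) ((div_lt_one hp0).2 hqp) n)
    (pow_le_one₀ hp0.le hp1)

end Scaling

/-- `|B_{n,p,q}((t-x)^m_{p,q};x)| ≤ C_m x(1-x)/[n]^⌊(m+1)/2⌋`. -/
theorem pq_powMoment_bound (m : ℕ) (hm : 1 ≤ m) :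
    ∃ C : ℝ, 0 < C ∧
      ∀ (n : ℕ), 1 ≤ n → ∀ p q : ℝ, 0 < q → q < p → p ≤ 1 →
        ∀ x ∈ Set.Icc (0 : ℝ) 1,
          |pqPowMoment p q n m x x| ≤ C * (x * (1 - x) / pqInt p q n ^ ((m + 1) / 2)) := by
  obtain ⟨m, rfl⟩ := Nat.exists_eq_add_of_le' hm
  refine ⟨(m + 1) * ∏ j ∈ range m, (3 * j + 5 : ℝ), by positivity,
    fun n hn p q hq0 hqp hp1 x hx => ?_⟩
  set C := (m + 1) * ∏ j ∈ range m, (3 * j + 5 : ℝ)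
  have hp0 : 0 < p := hq0.trans hqp
  have hq'0 : 0 ≤ q / p := by positivity
  have hq'1 : q / p < 1 := (div_lt_one hp0).2 hqp
  have hn0 : n ≠ 0 := Nat.one_le_iff_ne_zero.1 hn
  have hpn : 0 < pqInt p q n := by
    rw [pqInt_eq_pow_mul hp0.ne' hqp.ne]
    exact mul_pos (by positivity) (pqInt_one_pos hq'0 hq'1 hn0)
  have hinv : (pqInt 1 (q / p) n)⁻¹ ≤ (pqInt p q n)⁻¹ :=
    inv_anti₀ hpn (pqInt_le_pqInt_one_div hp0 hp1 hq0.le hqp n)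
  have hxx : 0 ≤ x * (1 - x) := mul_nonneg hx.1 (by linarith [hx.2])
  have hu0 : 0 ≤ (pqInt 1 (q / p) n)⁻¹ := inv_nonneg.2 (pqInt_one_nonneg hq'0 hq'1 n)
  rw [pqPowMoment_eq_pow_mul hp0.ne' hqp.ne, abs_mul, abs_of_pos (by positivity)]
  calc _ ≤ |pqPowMoment 1 (q / p) n (m + 1) x x| :=
        mul_le_of_le_one_left (abs_nonneg _) (pow_le_one₀ hp0.le hp1)
    _ ≤ C * (x * (1 - x) * (pqInt 1 (q / p) n)⁻¹ ^ ((m + 2) / 2)) :=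
        abs_pqPowMoment_one_succ_le hq'0 hq'1 hn0 m hx
    _ ≤ C * (x * (1 - x) * (pqInt p q n)⁻¹ ^ ((m + 2) / 2)) := by gcongr
    _ = _ := by rw [div_eq_mul_inv, inv_pow]
end
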